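/- With φ(x) := x − x³/3, one has ∫₀^∞ exp( (2/h)·φ(x) ) dx ~ √(π/2)·√h·exp( 4/(3h) ) as h → 0⁺. -/

import Mathlib

noncomputable section

open MeasureTheory

/-- `φ(x) = x − x³/3`. -/
def φ (x : ℝ) : ℝ := x - x ^ 3 / 3

/-!
On `[0, ∞)` the maximum of `φ` is `φ 1 = 2/3`, and `φ = 2/3 - ψ` with `ψ x = (x - 1)² (x + 2) / 3`,
so with `t = 2/h` the integral is `exp (4/(3h)) * ∫₀^∞ exp (-t ψ)`. The substitution
`u = √t (x - 1)` turns `√t ∫₀^∞ exp (-t ψ)` into `∫_{u > -√t} exp (-u² (1 + u/(3√t)))`.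
On that range `1 + u/(3√t) > 2/3`, so the integrands are dominated by `exp (-2u²/3)` and
dominated convergence gives the Gaussian integral `∫ exp (-u²) = √π`.
-/

namespace CubicLaplace

open Real Set Filter Topology

def ψ (x : ℝ) : ℝ := (x - 1) ^ 2 * (x + 2) / 3

lemma φ_eq_sub_ψ (x : ℝ) : φ x = 2 / 3 - ψ x := by
  unfold φ ψ; ring

def rescaledIntegrand (s u : ℝ) : ℝ := exp (-(u ^ 2 * (1 + u / (3 * s))))

lemma rescaledIntegrand_mul_sub_one {s : ℝ} (hs : s ≠ 0) (x : ℝ) :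
    rescaledIntegrand s (s * (x - 1)) = exp (-(s ^ 2 * ψ x)) := by
  unfold rescaledIntegrand ψ
  congr 1
  field_simp
  ring

lemma mul_setIntegral_exp_neg_sq_mul_ψ {s : ℝ} (hs : 0 < s) :
    s * ∫ x in Ioi 0, exp (-(s ^ 2 * ψ x)) = ∫ u in Ioi (-s), rescaledIntegrand s u := by
  have h_shift :
      ∫ x in Ioi 0, rescaledIntegrand s (x - s) = ∫ u in Ioi (-s), rescaledIntegrand s u := by
    simpa [preimage_sub_const_Ioi] using
      (measurePreserving_sub_right volume s).setIntegral_preimage_emb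
        (measurableEmbedding_subRight s) (rescaledIntegrand s) (Ioi (-s))
  calc s * ∫ x in Ioi 0, exp (-(s ^ 2 * ψ x))
      = s • ∫ x in Ioi 0, rescaledIntegrand s (s * x - s) := by
        simp only [← rescaledIntegrand_mul_sub_one hs.ne', mul_sub_one, smul_eq_mul]
    _ = ∫ u in Ioi (-s), rescaledIntegrand s u := by
        rw [integral_comp_mul_left_Ioi' (fun y ↦ rescaledIntegrand s (y - s)) 0 hs, mul_zero,
          h_shift]

lemma rescaledIntegrand_le_exp {s u : ℝ} (hs : 0 < s) (hu : -s < u) :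
    rescaledIntegrand s u ≤ exp (-(2 / 3) * u ^ 2) := by
  have h_ratio : -(1 / 3) < u / (3 * s) := by
    rw [lt_div_iff₀ (by positivity)]; linarith
  unfold rescaledIntegrand
  gcongr
  nlinarith [sq_nonneg u]

lemma tendsto_rescaledIntegrand (u : ℝ) :
    Tendsto (fun s ↦ rescaledIntegrand s u) atTop (𝓝 (exp (-u ^ 2))) := by
  have h : Tendsto (fun s : ℝ ↦ u / (3 * s)) atTop (𝓝 0) :=
    tendsto_const_nhds.div_atTop (tendsto_id.const_mul_atTop (by norm_num))
  have := (continuous_exp.tendsto _).comp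
    (((tendsto_const_nhds (x := (1 : ℝ))).add h).const_mul (u ^ 2)).neg
  simpa [rescaledIntegrand, Function.comp_def] using this

lemma tendsto_setIntegral_rescaledIntegrand :
    Tendsto (fun s ↦ ∫ u in Ioi (-s), rescaledIntegrand s u) atTop (𝓝 (√π)) := by
  have h_gauss : ∫ u, exp (-u ^ 2) = √π := by simpa using integral_gaussian 1
  rw [← h_gauss]
  simp_rw [← integral_indicator measurableSet_Ioi]
  refine tendsto_integral_filter_of_dominated_convergence (fun u ↦ exp (-(2 / 3) * u ^ 2)) ?_ ?_
    (integrable_exp_neg_mul_sq (by norm_num)) ?_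
  · refine .of_forall fun s ↦ (Continuous.aestronglyMeasurable ?_).indicator measurableSet_Ioi
    unfold rescaledIntegrand; fun_prop
  · filter_upwards [eventually_gt_atTop 0] with s hs
    refine .of_forall fun u ↦ ?_
    by_cases hu : u ∈ Ioi (-s)
    · rw [indicator_of_mem hu]
      exact (norm_of_nonneg (exp_pos _).le).trans_le (rescaledIntegrand_le_exp hs hu)
    · rw [indicator_of_notMem hu, norm_zero]; positivity
  · refine .of_forall fun u ↦ (tendsto_rescaledIntegrand u).congr' ?_
    filter_upwards [eventually_gt_atTop (-u)] with s hs
    rw [indicator_of_mem (show u ∈ Ioi (-s) from neg_lt.mp hs)]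

lemma tendsto_sqrt_mul_setIntegral_exp_neg_mul_ψ :
    Tendsto (fun t ↦ √t * ∫ x in Ioi 0, exp (-(t * ψ x))) atTop (𝓝 (√π)) := by
  refine (tendsto_setIntegral_rescaledIntegrand.comp tendsto_sqrt_atTop).congr' ?_
  filter_upwards [eventually_gt_atTop 0] with t ht
  rw [Function.comp_apply, ← mul_setIntegral_exp_neg_sq_mul_ψ (sqrt_pos.2 ht), sq_sqrt ht.le]

lemma exp_mul_φ (t x : ℝ) : exp (t * φ x) = exp (2 / 3 * t) * exp (-(t * ψ x)) := by
  rw [← exp_add, φ_eq_sub_ψ]; ring_nf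

end CubicLaplace

open Real Filter Set Topology CubicLaplace

/-- Laplace asymptotics: `∫₀^∞ exp((2/h) φ(x)) dx ~ √(π/2) √h exp(4/(3h))` as `h → 0⁺`. -/
theorem laplace_integral_asymptotics :
    Filter.Tendsto (fun h : ℝ =>
        (∫ x in Set.Ioi (0:ℝ), Real.exp ((2/h) * φ x)) /
          (Real.sqrt (Real.pi / 2) * Real.sqrt h * Real.exp (4 / (3 * h))))
      (nhdsWithin 0 (Set.Ioi 0)) (nhds 1) := by
  have h_t : Tendsto (fun h : ℝ ↦ 2 / h) (𝓝[>] 0) atTop := by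
    simpa only [div_eq_mul_inv] using tendsto_inv_nhdsGT_zero.const_mul_atTop two_pos
  have h_lim := (tendsto_sqrt_mul_setIntegral_exp_neg_mul_ψ.comp h_t).div_const √π
  rw [div_self (sqrt_pos.2 pi_pos).ne'] at h_lim
  refine h_lim.congr' ?_
  filter_upwards [self_mem_nhdsWithin] with h (hh : 0 < h)
  have h_sqrt : √(π / 2) * √h = √π / √(2 / h) := by
    rw [← sqrt_mul (by positivity), ← sqrt_div' _ (by positivity)]
    congr 1; field_simp
  have h_exp : 2 / 3 * (2 / h) = 4 / (3 * h) := by ring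
  simp_rw [Function.comp_apply, exp_mul_φ, integral_const_mul, h_exp, h_sqrt]
  field_simp

end
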